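/- arXiv:2512.18674 — 2 statements merged into one kernel-verified Lean document; each statement's English description precedes it below -/
import Mathlib

section
/- Let θ1, θ2, θ3, t, s, H, c be positive real constants and define g : ℝ → ℝ by g(y) = (θ1·exp(−θ2·y) + θ3 + t/s)·(H + c·y). Then g is continuously differentiable on ℝ and g is strictly convex on the interval [2/θ2 − H/c, ∞). -/
/-!
The second derivative of `(a e^{-by} + d)(H + cy)` is `a b e^{-by} (b (H + cy) - 2c)`: the
constant `d` only contributes an affine term, and the bracket is positive exactly to the right
of `2/b - H/c`.
-/

open Real Set

theorem strictConvexOn_of_hasDerivAt2_pos {D : Set ℝ} (hD : Convex ℝ D) {f f' f'' : ℝ → ℝ}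
    (hf : ∀ x, HasDerivAt f (f' x) x) (hf' : ∀ x, HasDerivAt f' (f'' x) x)
    (hf''₀ : ∀ x ∈ interior D, 0 < f'' x) : StrictConvexOn ℝ D f := by
  have hderiv : deriv f = f' := funext fun x => (hf x).deriv
  refine strictConvexOn_of_deriv2_pos hD (fun x _ => (hf x).continuousAt.continuousWithinAt)
    fun x hx => ?_
  rw [Function.iterate_succ_apply, Function.iterate_one, hderiv, (hf' x).deriv]
  exact hf''₀ x hx

section ExpAffineProduct

variable (a b d H c : ℝ)

theorem hasDerivAt_exp_neg_mul (y : ℝ) :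
    HasDerivAt (fun y => exp (-b * y)) (-b * exp (-b * y)) y := by
  simpa [mul_comm] using ((hasDerivAt_id y).const_mul (-b)).exp

theorem hasDerivAt_exp_affine_mul (y : ℝ) :
    HasDerivAt (fun y => (a * exp (-b * y) + d) * (H + c * y))
      (-a * b * exp (-b * y) * (H + c * y) + c * (a * exp (-b * y) + d)) y := by
  have hu := ((hasDerivAt_exp_neg_mul b y).const_mul a).add_const d
  have hv := ((hasDerivAt_id' y).const_mul c).const_add H
  exact (hu.mul hv).congr_deriv (by ring)

theorem hasDerivAt_deriv_exp_affine_mul (y : ℝ) :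
    HasDerivAt (fun y => -a * b * exp (-b * y) * (H + c * y) + c * (a * exp (-b * y) + d))
      (a * b * exp (-b * y) * (b * (H + c * y) - 2 * c)) y := by
  have hu := (hasDerivAt_exp_neg_mul b y).const_mul (-a * b)
  have hv := ((hasDerivAt_id' y).const_mul c).const_add H
  have hw := (((hasDerivAt_exp_neg_mul b y).const_mul a).add_const d).const_mul c
  exact ((hu.mul hv).add hw).congr_deriv (by ring)

variable {a b c}

theorem strictConvexOn_exp_affine_mul (ha : 0 < a) (hb : 0 < b) (hc : 0 < c) :
    StrictConvexOn ℝ (Ici (2 / b - H / c)) (fun y => (a * exp (-b * y) + d) * (H + c * y)) := by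
  refine strictConvexOn_of_hasDerivAt2_pos (convex_Ici _) (hasDerivAt_exp_affine_mul a b d H c)
    (hasDerivAt_deriv_exp_affine_mul a b d H c) fun y hy => ?_
  rw [interior_Ici, mem_Ioi, sub_lt_iff_lt_add, div_lt_iff₀ hb] at hy
  have hbracket : 0 < b * (H + c * y) - 2 * c := by
    have hfactor : b * (H + c * y) - 2 * c = c * ((y + H / c) * b - 2) := by field_simp; ring
    exact hfactor ▸ mul_pos hc (sub_pos.2 hy)
  positivity

end ExpAffineProduct

theorem cost_rate_strictConvexOn_Ici_general
    (θ1 θ2 θ3 t s H c : ℝ)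
    (hθ1 : 0 < θ1) (hθ2 : 0 < θ2)
    (hc : 0 < c)
    (g : ℝ → ℝ)
    (hg : ∀ y, g y = (θ1 * Real.exp (-θ2 * y) + θ3 + t / s) * (H + c * y)) :
    ContDiff ℝ 1 g ∧ StrictConvexOn ℝ (Set.Ici (2 / θ2 - H / c)) g := by
  have hg' : g = fun y => (θ1 * exp (-θ2 * y) + (θ3 + t / s)) * (H + c * y) :=
    funext fun y => by rw [hg, add_assoc]
  subst hg'
  exact ⟨by fun_prop, strictConvexOn_exp_affine_mul (θ3 + t / s) H hθ1 hθ2 hc⟩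

/-- The cost-rate function `g(y) = (θ1·exp(−θ2·y) + θ3 + t/s)·(H + c·y)` is
continuously differentiable on `ℝ` and strictly convex on `[2/θ2 − H/c, ∞)`. -/
theorem cost_rate_strictConvexOn_Ici
    (θ1 θ2 θ3 t s H c : ℝ)
    (hθ1 : 0 < θ1) (hθ2 : 0 < θ2) (hθ3 : 0 < θ3)
    (ht : 0 < t) (hs : 0 < s) (hH : 0 < H) (hc : 0 < c)
    (g : ℝ → ℝ)
    (hg : ∀ y, g y = (θ1 * Real.exp (-θ2 * y) + θ3 + t / s) * (H + c * y)) :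
    ContDiff ℝ 1 g ∧ StrictConvexOn ℝ (Set.Ici (2 / θ2 - H / c)) g :=
  cost_rate_strictConvexOn_Ici_general θ1 θ2 θ3 t s H c hθ1 hθ2 hc g hg
end

section
/- Let θ1, θ2, θ3, t, s, H, c be positive real constants and define g : ℝ → ℝ by g(y) = (θ1·exp(−θ2·y) + θ3 + t/s)·(H + c·y). If θ2 ≥ 2c/H, then g is strictly convex on the open interval (0, ∞). -/
open Real Set

/-- If `θ2 ≥ 2c/H`, then the cost-rate function
`g(y) = (θ1·exp(−θ2·y) + θ3 + t/s)·(H + c·y)` is strictly convex on `(0, ∞)`. -/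
theorem cost_rate_strictConvexOn_Ioi
    (θ1 θ2 θ3 t s H c : ℝ)
    (hθ1 : 0 < θ1) (hθ2 : 0 < θ2) (hθ3 : 0 < θ3)
    (ht : 0 < t) (hs : 0 < s) (hH : 0 < H) (hc : 0 < c)
    (g : ℝ → ℝ)
    (hg : ∀ y, g y = (θ1 * Real.exp (-θ2 * y) + θ3 + t / s) * (H + c * y))
    (hθ2H : 2 * c / H ≤ θ2) :
    StrictConvexOn ℝ (Set.Ioi (0 : ℝ)) g := by
  have hgfun : g = fun y => (θ1 * Real.exp (-θ2 * y) + θ3 + t / s) * (H + c * y) :=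
    funext hg
  subst hgfun
  -- first derivative
  have hlin : ∀ y : ℝ, HasDerivAt (fun y : ℝ => -θ2 * y) (-θ2) y := by
    intro y
    simpa using (hasDerivAt_id y).const_mul (-θ2)
  have hexp : ∀ y : ℝ, HasDerivAt (fun y : ℝ => Real.exp (-θ2 * y))
      (Real.exp (-θ2 * y) * (-θ2)) y := fun y => (hlin y).exp
  have haff : ∀ y : ℝ, HasDerivAt (fun y : ℝ => H + c * y) c y := by
    intro y
    simpa using ((hasDerivAt_id y).const_mul c).const_add H
  have hd1 : ∀ y : ℝ, HasDerivAt (fun y => (θ1 * Real.exp (-θ2 * y) + θ3 + t / s) * (H + c * y))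
      (θ1 * (Real.exp (-θ2 * y) * (-θ2)) * (H + c * y)
        + (θ1 * Real.exp (-θ2 * y) + θ3 + t / s) * c) y := by
    intro y
    exact ((((hexp y).const_mul θ1).add_const θ3).add_const (t / s)).mul (haff y)
  have hderiv1 : deriv (fun y => (θ1 * Real.exp (-θ2 * y) + θ3 + t / s) * (H + c * y))
      = fun y => θ1 * (Real.exp (-θ2 * y) * (-θ2)) * (H + c * y)
        + (θ1 * Real.exp (-θ2 * y) + θ3 + t / s) * c :=
    funext fun y => (hd1 y).deriv
  have hd2 : ∀ y : ℝ, HasDerivAt (fun y => θ1 * (Real.exp (-θ2 * y) * (-θ2)) * (H + c * y)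
        + (θ1 * Real.exp (-θ2 * y) + θ3 + t / s) * c)
      (θ1 * (Real.exp (-θ2 * y) * (-θ2) * (-θ2)) * (H + c * y)
        + θ1 * (Real.exp (-θ2 * y) * (-θ2)) * c
        + θ1 * (Real.exp (-θ2 * y) * (-θ2)) * c) y := by
    intro y
    have h1 : HasDerivAt (fun y => θ1 * (Real.exp (-θ2 * y) * (-θ2)) * (H + c * y))
        (θ1 * (Real.exp (-θ2 * y) * (-θ2) * (-θ2)) * (H + c * y)
          + θ1 * (Real.exp (-θ2 * y) * (-θ2)) * c) y := by
      have := (((hexp y).mul_const (-θ2)).const_mul θ1).mul (haff y)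
      exact this
    have h2 : HasDerivAt (fun y => (θ1 * Real.exp (-θ2 * y) + θ3 + t / s) * c)
        (θ1 * (Real.exp (-θ2 * y) * (-θ2)) * c) y := by
      have := ((((hexp y).const_mul θ1).add_const θ3).add_const (t / s)).mul_const c
      convert this using 1
    exact h1.add h2
  apply strictConvexOn_of_deriv2_pos (convex_Ioi 0)
  · apply Continuous.continuousOn
    fun_prop
  · intro y hy
    rw [interior_Ioi] at hy
    have hy' : 0 < y := hy
    have : deriv^[2] (fun y => (θ1 * Real.exp (-θ2 * y) + θ3 + t / s) * (H + c * y)) y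
        = θ1 * (Real.exp (-θ2 * y) * (-θ2) * (-θ2)) * (H + c * y)
          + θ1 * (Real.exp (-θ2 * y) * (-θ2)) * c
          + θ1 * (Real.exp (-θ2 * y) * (-θ2)) * c := by
      simp only [Function.iterate_succ, Function.iterate_zero, Function.comp_apply, id_eq]
      rw [hderiv1]
      exact (hd2 y).deriv
    rw [this]
    have hE : 0 < Real.exp (-θ2 * y) := Real.exp_pos _
    have key : 0 < θ2 * (H + c * y) - 2 * c := by
      have h1 : 2 * c ≤ θ2 * H := by
        rw [div_le_iff₀ hH] at hθ2H
        linarith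
      nlinarith [mul_pos hθ2 (mul_pos hc hy')]
    have : θ1 * (Real.exp (-θ2 * y) * (-θ2) * (-θ2)) * (H + c * y)
          + θ1 * (Real.exp (-θ2 * y) * (-θ2)) * c
          + θ1 * (Real.exp (-θ2 * y) * (-θ2)) * c
        = θ1 * Real.exp (-θ2 * y) * θ2 * (θ2 * (H + c * y) - 2 * c) := by ring
    rw [this]
    positivity
end
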